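/- arXiv:1611.04725 — 2 statements merged into one kernel-verified Lean document; each statement's English description precedes it below -/
import Mathlib

section
/- Let f : ℝ³ → ℝ be harmonic, i.e. twice continuously differentiable with vanishing Laplacian on all of ℝ³. If there exists M > 0 such that f satisfies the weak-L³ bound with constant M (that is, for every h > 0 the Lebesgue measure of {x ∈ ℝ³ : |f(x)| > h} is at most M³ h⁻³), then f is identically zero. -/
open MeasureTheory

/-- The Laplacian of `f : ℝ³ → ℝ`, written as the sum of the second partial
derivatives along the coordinate directions. -/
noncomputable def laplacian3 (f : EuclideanSpace ℝ (Fin 3) → ℝ)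
    (x : EuclideanSpace ℝ (Fin 3)) : ℝ :=
  ∑ i : Fin 3,
    fderiv ℝ (fun y => fderiv ℝ f y (EuclideanSpace.single i (1 : ℝ))) x
      (EuclideanSpace.single i (1 : ℝ))

/-!
Testing `Δf = 0` against `η² f`, for a cutoff `η` equal to `1` on `B_R`, supported in `B_{2R}`
and with `|∇η| ≲ 1/R`, gives the Caccioppoli inequality `∫_{B_R} |∇f|² ≲ R⁻² ∫_{B_{2R}} f²`.
The layer-cake formula turns the weak-L³ bound into `∫_{B_{2R}} f² = O(R)`, so letting `R → ∞`
shows `∇f = 0`. Hence `f` is constant, and a nonzero constant is not in weak L³ of a space of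
infinite measure.
-/

open Set Metric Module
open scoped ENNReal

open scoped ContDiff in
theorem exists_cutoff_norm_fderiv_le (E : Type*) [NormedAddCommGroup E] [NormedSpace ℝ E]
    [FiniteDimensional ℝ E] :
    ∃ K : ℝ, ∀ R : ℝ, 0 < R → ∃ η : E → ℝ, ContDiff ℝ ∞ η ∧
      tsupport η ⊆ closedBall 0 (2 * R) ∧ EqOn η 1 (closedBall 0 R) ∧
      ∀ x, ‖fderiv ℝ η x‖ ≤ K / R := by
  let b : ContDiffBump (0 : E) := ⟨1, 2, one_pos, one_lt_two⟩
  obtain ⟨K, hK⟩ := (b.hasCompactSupport.fderiv (𝕜 := ℝ)).exists_bound_of_continuous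
    ((b.contDiff (n := 1)).continuous_fderiv one_ne_zero)
  refine ⟨K, fun R hR => ?_⟩
  let η : ContDiffBump (0 : E) := ⟨R, 2 * R, hR, by linarith⟩
  have hη : ⇑η = fun x => b (R⁻¹ • x) := by
    funext x
    simp only [ContDiffBump.apply, b, η, sub_zero, inv_one, one_smul]
    congr 1
    field_simp
  refine ⟨η, η.contDiff, η.tsupport_eq.le, fun x hx => η.one_of_mem_closedBall hx, fun x => ?_⟩
  rw [hη, fderiv_comp_smul, norm_smul, norm_inv, Real.norm_of_nonneg hR.le, inv_mul_eq_div]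
  gcongr
  exact hK _

section PartialDeriv

variable {n : ℕ}

-- Defined through `fderiv` so that `laplacian3 f x` unfolds to
-- `∑ i, partialDeriv i (partialDeriv i f) x`.
noncomputable def partialDeriv (i : Fin n) (f : EuclideanSpace ℝ (Fin n) → ℝ)
    (x : EuclideanSpace ℝ (Fin n)) : ℝ :=
  fderiv ℝ f x (EuclideanSpace.single i 1)

variable {i : Fin n} {f g : EuclideanSpace ℝ (Fin n) → ℝ} {x : EuclideanSpace ℝ (Fin n)}

theorem abs_partialDeriv_le_norm_fderiv : |partialDeriv i f x| ≤ ‖fderiv ℝ f x‖ := by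
  simpa [partialDeriv] using (fderiv ℝ f x).le_opNorm (EuclideanSpace.single i 1)

theorem partialDeriv_mul (hf : DifferentiableAt ℝ f x) (hg : DifferentiableAt ℝ g x) :
    partialDeriv i (fun y => f y * g y) x =
      f x * partialDeriv i g x + partialDeriv i f x * g x := by
  simp only [partialDeriv, fderiv_fun_mul hf hg, add_apply, smul_apply, smul_eq_mul]
  ring

theorem ContDiff.partialDeriv {m n : WithTop ℕ∞} (hf : ContDiff ℝ m f) (hnm : n + 1 ≤ m) :
    ContDiff ℝ n (_root_.partialDeriv i f) :=
  (hf.fderiv_right hnm).clm_apply contDiff_const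

theorem ContDiff.continuous_partialDeriv {n : WithTop ℕ∞} (hf : ContDiff ℝ n f) (hn : n ≠ 0) :
    Continuous (_root_.partialDeriv i f) :=
  (hf.continuous_fderiv hn).clm_apply continuous_const

theorem HasCompactSupport.partialDeriv (hf : HasCompactSupport f) :
    HasCompactSupport (_root_.partialDeriv i f) :=
  hf.fderiv_apply (𝕜 := ℝ) _

theorem partialDeriv_of_notMem_tsupport (hx : x ∉ tsupport f) : partialDeriv i f x = 0 := by
  simp [partialDeriv, fderiv_of_notMem_tsupport ℝ hx]

theorem fderiv_eq_zero_of_forall_partialDeriv_eq_zero (h : ∀ i, partialDeriv i f x = 0) :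
    fderiv ℝ f x = 0 :=
  ContinuousLinearMap.coe_injective <|
    (EuclideanSpace.basisFun (Fin n) ℝ).toBasis.ext fun i => by simpa [partialDeriv] using h i

variable {f η φ : EuclideanSpace ℝ (Fin n) → ℝ}

theorem integral_sum_partialDeriv_mul_partialDeriv_eq_zero (hf : ContDiff ℝ 2 f)
    (hΔ : ∀ x, ∑ i, partialDeriv i (partialDeriv i f) x = 0) (hφ : ContDiff ℝ 1 φ)
    (hφc : HasCompactSupport φ) :
    ∫ x, ∑ i, partialDeriv i φ x * partialDeriv i f x = 0 := by
  have hf' (i : Fin n) : ContDiff ℝ 1 (partialDeriv i f) := hf.partialDeriv (by norm_num)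
  have hφ' (i : Fin n) : Integrable fun x => partialDeriv i φ x * partialDeriv i f x :=
    ((hφ.continuous_partialDeriv one_ne_zero).mul (hf' i).continuous
      ).integrable_of_hasCompactSupport hφc.partialDeriv.mul_right
  have hf'' (i : Fin n) : Integrable fun x => φ x * partialDeriv i (partialDeriv i f) x :=
    (hφ.continuous.mul ((hf' i).continuous_partialDeriv one_ne_zero)
      ).integrable_of_hasCompactSupport hφc.mul_right
  have hibp (i : Fin n) : ∫ x, φ x * partialDeriv i (partialDeriv i f) x =
      -∫ x, partialDeriv i φ x * partialDeriv i f x :=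
    integral_mul_fderiv_eq_neg_fderiv_mul_of_integrable (hφ' i) (hf'' i)
      ((hφ.continuous.mul (hf' i).continuous).integrable_of_hasCompactSupport hφc.mul_right)
      (fun x _ => hφ.differentiable one_ne_zero x)
      (fun x _ => (hf' i).differentiable one_ne_zero x)
  calc ∫ x, ∑ i, partialDeriv i φ x * partialDeriv i f x
      = -∑ i, ∫ x, φ x * partialDeriv i (partialDeriv i f) x := by
        simp only [integral_finsetSum _ fun i _ => hφ' i, hibp, Finset.sum_neg_distrib, neg_neg]
    _ = -∫ x, φ x * ∑ i, partialDeriv i (partialDeriv i f) x := by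
        simp only [← integral_finsetSum _ fun i _ => hf'' i, Finset.mul_sum]
    _ = 0 := by simp [hΔ]

theorem integrable_sum_sq_mul_partialDeriv (hf : ContDiff ℝ 1 f) (hη : Continuous η)
    (hηc : HasCompactSupport η) :
    Integrable fun x => ∑ i, (η x * partialDeriv i f x) ^ 2 :=
  (continuous_finsetSum _ fun i _ => (hη.mul (hf.continuous_partialDeriv one_ne_zero)).pow 2
    ).integrable_of_hasCompactSupport
    (HasCompactSupport.intro hηc fun x hx => by simp [image_eq_zero_of_notMem_tsupport hx])

theorem integral_sum_sq_mul_partialDeriv_le (hf : ContDiff ℝ 2 f)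
    (hΔ : ∀ x, ∑ i, partialDeriv i (partialDeriv i f) x = 0) (hη : ContDiff ℝ 1 η)
    (hηc : HasCompactSupport η) :
    ∫ x, ∑ i, (η x * partialDeriv i f x) ^ 2 ≤
      4 * ∫ x, f x ^ 2 * ∑ i, partialDeriv i η x ^ 2 := by
  have hf1 : ContDiff ℝ 1 f := hf.of_le one_le_two
  have hηd := hη.differentiable one_ne_zero
  have hfd := hf1.differentiable one_ne_zero
  have hη' (i : Fin n) := hη.continuous_partialDeriv (i := i) one_ne_zero
  have hf' (i : Fin n) := hf1.continuous_partialDeriv (i := i) one_ne_zero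
  have hηc' := hη.continuous
  have hfc := hf1.continuous
  have htest := integral_sum_partialDeriv_mul_partialDeriv_eq_zero hf hΔ
    ((hη.mul hη).mul hf1) (hηc.mul_right.mul_right)
  have hpartial (x : EuclideanSpace ℝ (Fin n)) (i : Fin n) :
      partialDeriv i (fun y => η y * η y * f y) x =
        η x * η x * partialDeriv i f x + 2 * η x * partialDeriv i η x * f x := by
    rw [partialDeriv_mul (f := fun y => η y * η y) ((hηd x).mul (hηd x)) (hfd x),
      partialDeriv_mul (hηd x) (hηd x)]
    ring
  have hpt (x : EuclideanSpace ℝ (Fin n)) :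
      (∑ i, (η x * partialDeriv i f x) ^ 2) / 2 - 2 * (f x ^ 2 * ∑ i, partialDeriv i η x ^ 2) ≤
        ∑ i, partialDeriv i (fun y => η y * η y * f y) x * partialDeriv i f x := by
    rw [Finset.mul_sum, Finset.mul_sum, Finset.sum_div, ← Finset.sum_sub_distrib]
    gcongr with i
    rw [hpartial]
    nlinarith [sq_nonneg (η x * partialDeriv i f x + 2 * f x * partialDeriv i η x)]
  have hP := integrable_sum_sq_mul_partialDeriv hf1 hηc' hηc
  have hS : Integrable fun x => f x ^ 2 * ∑ i, partialDeriv i η x ^ 2 :=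
    (by fun_prop : Continuous _).integrable_of_hasCompactSupport
      (HasCompactSupport.intro hηc fun x hx => by simp [partialDeriv_of_notMem_tsupport hx])
  have hQ : Integrable fun x =>
      ∑ i, partialDeriv i (fun y => η y * η y * f y) x * partialDeriv i f x := by
    simp only [hpartial]
    exact (by fun_prop : Continuous _).integrable_of_hasCompactSupport
      (HasCompactSupport.intro hηc fun x hx => by
        simp [image_eq_zero_of_notMem_tsupport hx, partialDeriv_of_notMem_tsupport hx])
  have hmono : ∫ x, ((∑ i, (η x * partialDeriv i f x) ^ 2) / 2 -
      2 * (f x ^ 2 * ∑ i, partialDeriv i η x ^ 2)) ≤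
      ∫ x, ∑ i, partialDeriv i (fun y => η y * η y * f y) x * partialDeriv i f x :=
    integral_mono ((hP.div_const 2).sub (hS.const_mul 2)) hQ hpt
  rw [integral_sub (hP.div_const 2) (hS.const_mul 2), integral_div, integral_const_mul,
    htest] at hmono
  linarith

theorem setIntegral_sum_sq_partialDeriv_le (hf : ContDiff ℝ 2 f)
    (hΔ : ∀ x, ∑ i, partialDeriv i (partialDeriv i f) x = 0) (hη : ContDiff ℝ 1 η)
    {s t : Set (EuclideanSpace ℝ (Fin n))} (hs : IsCompact s) (hηs : tsupport η ⊆ s)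
    (ht : MeasurableSet t) (hη1 : EqOn η 1 t) {L : ℝ} (hL : ∀ x, ‖fderiv ℝ η x‖ ≤ L) :
    ∫ x in t, ∑ i, partialDeriv i f x ^ 2 ≤ 4 * (n * L ^ 2) * ∫ x in s, f x ^ 2 := by
  have hηc : HasCompactSupport η := hs.of_isClosed_subset (isClosed_tsupport η) hηs
  have hgrad (x : EuclideanSpace ℝ (Fin n)) : ∑ i, partialDeriv i η x ^ 2 ≤ n * L ^ 2 :=
    calc ∑ i, partialDeriv i η x ^ 2 ≤ ∑ _i : Fin n, L ^ 2 :=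
          Finset.sum_le_sum fun i _ => sq_le_sq.2
            ((abs_partialDeriv_le_norm_fderiv.trans (hL x)).trans (le_abs_self L))
      _ = n * L ^ 2 := by simp
  have hfs : IntegrableOn (fun x => f x ^ 2) s :=
    (hf.continuous.pow 2).continuousOn.integrableOn_compact hs
  have hSs : IntegrableOn (fun x => f x ^ 2 * ∑ i, partialDeriv i η x ^ 2) s :=
    ((hf.continuous.pow 2).mul (continuous_finsetSum _ fun i _ =>
      (hη.continuous_partialDeriv one_ne_zero).pow 2)).continuousOn.integrableOn_compact hs
  calc ∫ x in t, ∑ i, partialDeriv i f x ^ 2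
      = ∫ x in t, ∑ i, (η x * partialDeriv i f x) ^ 2 :=
        setIntegral_congr_fun ht fun x hx => by simp [hη1 hx]
    _ ≤ ∫ x, ∑ i, (η x * partialDeriv i f x) ^ 2 :=
        setIntegral_le_integral (integrable_sum_sq_mul_partialDeriv (hf.of_le one_le_two)
          hη.continuous hηc) (.of_forall fun x => by positivity)
    _ ≤ 4 * ∫ x, f x ^ 2 * ∑ i, partialDeriv i η x ^ 2 :=
        integral_sum_sq_mul_partialDeriv_le hf hΔ hη hηc
    _ = 4 * ∫ x in s, f x ^ 2 * ∑ i, partialDeriv i η x ^ 2 := by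
        rw [setIntegral_eq_integral_of_forall_compl_eq_zero fun x hx => by
          simp [partialDeriv_of_notMem_tsupport fun h => hx (hηs h)]]
    _ ≤ 4 * ∫ x in s, f x ^ 2 * (n * L ^ 2) :=
        mul_le_mul_of_nonneg_left (setIntegral_mono_on hSs (hfs.mul_const _) hs.measurableSet
          fun x _ => mul_le_mul_of_nonneg_left (hgrad x) (sq_nonneg _)) (by norm_num)
    _ = 4 * (n * L ^ 2) * ∫ x in s, f x ^ 2 := by rw [integral_mul_const]; ring

theorem fderiv_eq_zero_of_integral_sq_closedBall_le (hf : ContDiff ℝ 2 f)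
    (hΔ : ∀ x, ∑ i, partialDeriv i (partialDeriv i f) x = 0) {C : ℝ}
    (hC : ∀ R : ℝ, 0 < R → ∫ x in closedBall 0 R, f x ^ 2 ≤ C * R)
    (x : EuclideanSpace ℝ (Fin n)) : fderiv ℝ f x = 0 := by
  obtain ⟨K, hK⟩ := exists_cutoff_norm_fderiv_le (EuclideanSpace ℝ (Fin n))
  have hg : Continuous fun y => ∑ i, partialDeriv i f y ^ 2 :=
    continuous_finsetSum _ fun i _ => (hf.continuous_partialDeriv two_ne_zero).pow 2
  set r := ‖x‖ + 1
  have hbound (R : ℝ) (hrR : r ≤ R) :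
      ∫ y in ball 0 r, ∑ i, partialDeriv i f y ^ 2 ≤ 8 * n * K ^ 2 * C / R := by
    have hR : 0 < R := lt_of_lt_of_le (by positivity) hrR
    obtain ⟨η, hηC, hηs, hη1, hηK⟩ := hK R hR
    calc ∫ y in ball 0 r, ∑ i, partialDeriv i f y ^ 2
        ≤ 4 * (n * (K / R) ^ 2) * ∫ y in closedBall 0 (2 * R), f y ^ 2 :=
          setIntegral_sum_sq_partialDeriv_le hf hΔ (hηC.of_le (mod_cast le_top))
            (isCompact_closedBall _ _) hηs measurableSet_ball
            (hη1.mono (ball_subset_closedBall.trans (closedBall_subset_closedBall hrR))) hηK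
      _ ≤ 4 * (n * (K / R) ^ 2) * (C * (2 * R)) := by gcongr; exact hC _ (by positivity)
      _ = 8 * n * K ^ 2 * C / R := by field_simp; ring
  have hzero : ∫ y in ball 0 r, ∑ i, partialDeriv i f y ^ 2 = 0 :=
    le_antisymm (ge_of_tendsto (tendsto_const_nhds.div_atTop Filter.tendsto_id)
        (Filter.eventually_atTop.2 ⟨r, hbound⟩))
      (setIntegral_nonneg measurableSet_ball fun y _ => by positivity)
  rw [setIntegral_eq_zero_iff_of_nonneg_ae (.of_forall fun y => by positivity)
    ((hg.continuousOn.integrableOn_compact (isCompact_closedBall 0 r)).mono_set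
      ball_subset_closedBall)] at hzero
  have hx := Measure.eqOn_open_of_ae_eq hzero isOpen_ball hg.continuousOn continuousOn_const
    (by simp [r] : x ∈ ball 0 r)
  refine fderiv_eq_zero_of_forall_partialDeriv_eq_zero fun i => ?_
  simpa using (Finset.sum_eq_zero_iff_of_nonneg fun i _ => sq_nonneg _).1 hx i (Finset.mem_univ i)

end PartialDeriv

theorem lintegral_sq_le_of_weakL3 {α : Type*} [MeasurableSpace α] {μ : Measure α}
    {f : α → ℝ} (hf : AEMeasurable f μ) {M : ℝ} (hM : 0 ≤ M)
    (hweak : ∀ h : ℝ, 0 < h → μ {x | h < |f x|} ≤ ENNReal.ofReal (M ^ 3 / h ^ 3))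
    (A : Set α) {s : ℝ} (hs : 0 < s) :
    ∫⁻ x in A, ENNReal.ofReal (f x ^ 2) ∂μ ≤
      μ A * ENNReal.ofReal s + ENNReal.ofReal (2 * M ^ 3 / √s) := by
  rw [lintegral_eq_lintegral_meas_lt _ (.of_forall fun x => sq_nonneg _)
    (hf.restrict.pow_const 2), ← Ioc_union_Ioi_eq_Ioi hs.le,
    lintegral_union measurableSet_Ioi Ioc_disjoint_Ioi_same]
  gcongr
  · calc ∫⁻ t in Ioc 0 s, μ.restrict A {x | t < f x ^ 2}
        ≤ ∫⁻ _ in Ioc 0 s, μ A := lintegral_mono fun t => by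
          simpa only [Measure.restrict_apply_univ] using
            measure_mono (μ := μ.restrict A) (subset_univ {x | t < f x ^ 2})
      _ = μ A * ENNReal.ofReal s := by rw [setLIntegral_const, Real.volume_Ioc, sub_zero]
  · have hint : IntegrableOn (fun t : ℝ => M ^ 3 * t ^ (-(3 / 2) : ℝ)) (Ioi s) :=
      (integrableOn_Ioi_rpow_of_lt (by norm_num) hs).const_mul _
    calc ∫⁻ t in Ioi s, μ.restrict A {x | t < f x ^ 2}
        ≤ ∫⁻ t in Ioi s, ENNReal.ofReal (M ^ 3 * t ^ (-(3 / 2) : ℝ)) := by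
          refine setLIntegral_mono' measurableSet_Ioi fun t ht => ?_
          have ht0 : 0 < t := hs.trans ht
          have hsub : {x | t < f x ^ 2} ⊆ {x | √t < |f x|} := fun x hx => by
            simpa [Real.sqrt_sq_eq_abs] using Real.sqrt_lt_sqrt ht0.le hx
          have hpow : M ^ 3 / √t ^ 3 = M ^ 3 * t ^ (-(3 / 2) : ℝ) := by
            rw [Real.sqrt_eq_rpow, ← Real.rpow_natCast (t ^ (1 / 2 : ℝ)) 3,
              ← Real.rpow_mul ht0.le, Real.rpow_neg ht0.le, div_eq_mul_inv]
            norm_num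
          calc μ.restrict A {x | t < f x ^ 2} ≤ μ {x | √t < |f x|} :=
                (Measure.restrict_le_self _).trans (measure_mono hsub)
            _ ≤ _ := hpow ▸ hweak _ (Real.sqrt_pos.2 ht0)
      _ = ENNReal.ofReal (2 * M ^ 3 / √s) := by
          rw [← ofReal_integral_eq_lintegral_ofReal hint
            ((ae_restrict_mem measurableSet_Ioi).mono fun t ht => by
              have : 0 < t := hs.trans ht
              positivity),
            integral_const_mul, integral_Ioi_rpow_of_lt (by norm_num) hs, Real.sqrt_eq_rpow]
          congr 1
          rw [show (-(3 / 2) + 1 : ℝ) = -(1 / 2) by norm_num, Real.rpow_neg hs.le]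
          ring

theorem exists_integral_sq_closedBall_le_of_weakL3 {E : Type*} [NormedAddCommGroup E]
    [NormedSpace ℝ E] [FiniteDimensional ℝ E] [MeasurableSpace E] [BorelSpace E]
    (hE : finrank ℝ E = 3) (μ : Measure E) [μ.IsAddHaarMeasure]
    {f : E → ℝ} (hf : AEMeasurable f μ) {M : ℝ} (hM : 0 ≤ M)
    (hweak : ∀ h : ℝ, 0 < h → μ {x | h < |f x|} ≤ ENNReal.ofReal (M ^ 3 / h ^ 3)) :
    ∃ C : ℝ, ∀ R : ℝ, 0 < R → ∫ x in closedBall 0 R, f x ^ 2 ∂μ ≤ C * R := by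
  set V := (μ (ball 0 1)).toReal
  refine ⟨V + 2 * M ^ 3, fun R hR => ?_⟩
  -- Split the layer-cake integral at height `R⁻²`, which balances `μ (B_R) ≍ R³` against the tail.
  have hlayer := lintegral_sq_le_of_weakL3 hf hM hweak (closedBall 0 R) (s := R⁻¹ ^ 2)
    (by positivity)
  rw [Measure.addHaar_closedBall _ _ hR.le, hE, ← ENNReal.ofReal_toReal measure_ball_lt_top.ne,
    ← ENNReal.ofReal_mul (by positivity), ← ENNReal.ofReal_mul (by positivity),
    ← ENNReal.ofReal_add (by positivity) (by positivity), Real.sqrt_sq (by positivity)] at hlayer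
  rw [integral_eq_lintegral_of_nonneg_ae (.of_forall fun x => sq_nonneg _)
    (hf.restrict.pow_const 2).aestronglyMeasurable]
  refine ENNReal.toReal_le_of_le_ofReal (by positivity) (hlayer.trans_eq ?_)
  congr 1
  field_simp
  ring

theorem eq_zero_of_weakL3_of_forall_eq {α : Type*} [MeasurableSpace α] {μ : Measure α}
    (hμ : μ univ = ∞) {f : α → ℝ} {c M : ℝ}
    (hweak : ∀ h : ℝ, 0 < h → μ {x | h < |f x|} ≤ ENNReal.ofReal (M ^ 3 / h ^ 3))
    (hf : ∀ x, f x = c) : c = 0 := by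
  by_contra hc
  have hlevel : {x | |c| / 2 < |f x|} = univ :=
    eq_univ_of_forall fun x => by simp [hf x, abs_pos.2 hc]
  have := hweak (|c| / 2) (by positivity)
  rw [hlevel, hμ] at this
  exact ENNReal.ofReal_ne_top (top_le_iff.1 this)

/-- There is no nonzero harmonic function on ℝ³ satisfying a weak-L³ bound. -/
theorem stmt_0 (f : EuclideanSpace ℝ (Fin 3) → ℝ)
    (hf : ContDiff ℝ 2 f) (hharm : ∀ x, laplacian3 f x = 0)
    (M : ℝ) (hM : 0 < M)
    (hweak : ∀ h : ℝ, 0 < h →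
      volume {x : EuclideanSpace ℝ (Fin 3) | h < |f x|} ≤ ENNReal.ofReal (M ^ 3 / h ^ 3)) :
    ∀ x, f x = 0 := by
  obtain ⟨C, hC⟩ := exists_integral_sq_closedBall_le_of_weakL3 finrank_euclideanSpace_fin volume
    hf.continuous.aemeasurable hM.le hweak
  have hconst (x : EuclideanSpace ℝ (Fin 3)) : f x = f 0 :=
    is_const_of_fderiv_eq_zero (hf.differentiable two_ne_zero)
      (fderiv_eq_zero_of_integral_sq_closedBall_le hf hharm hC) x 0
  have hf0 : f 0 = 0 :=
    eq_zero_of_weakL3_of_forall_eq (measure_univ_of_isAddLeftInvariant volume) hweak hconst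
  exact fun x => (hconst x).trans hf0
end

section
/- There exists an absolute constant C > 0 such that for every continuously differentiable, compactly supported function f : ℝ³ → ℝ that satisfies the weak-L³ bound with constant M > 0, one has ∫_{ℝ³} |f(x)|⁴ dx ≤ C M² ∫_{ℝ³} |∇f(x)|² dx. -/
/-!
By the layer-cake formula, `∫ |f|⁴ = 4 ∫₀^∞ t³ |{|f| > t}| dt`. Below a height `A` the weak-L³
bound makes the integrand at most `M³`; above it Chebyshev's inequality for `|f|⁶` makes it at
most `‖f‖₆⁶ t⁻³`. Choosing `A = ‖f‖₆² / M` gives `∫ |f|⁴ ≤ 6 M² ‖f‖₆²`, and the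
Gagliardo–Nirenberg–Sobolev inequality `‖f‖₆ ≤ K ‖∇f‖₂` in dimension three finishes the proof.
-/

open MeasureTheory Set Module
open scoped NNReal ENNReal

section LayerCake

variable {α : Type*} [MeasurableSpace α] {μ : Measure α} {f : α → ℝ}

theorem meas_lt_abs_le_of_lintegral_pow_le (hf : AEMeasurable f μ) {p : ℕ} {n : ℝ}
    (hn : ∫⁻ x, ENNReal.ofReal (|f x| ^ p) ∂μ ≤ ENNReal.ofReal n) {t : ℝ} (ht : 0 < t) :
    μ {x | t < |f x|} ≤ ENNReal.ofReal (n / t ^ p) := by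
  have hsub : {x | t < |f x|} ⊆ {x | ENNReal.ofReal (t ^ p) ≤ ENNReal.ofReal (|f x| ^ p)} :=
    fun x hx => ENNReal.ofReal_le_ofReal (pow_le_pow_left₀ ht.le (le_of_lt hx) p)
  calc μ {x | t < |f x|}
      ≤ (∫⁻ x, ENNReal.ofReal (|f x| ^ p) ∂μ) / ENNReal.ofReal (t ^ p) :=
        (measure_mono hsub).trans <| meas_ge_le_lintegral_div (by fun_prop)
          (by simp [pow_pos ht]) ENNReal.ofReal_ne_top
    _ ≤ ENNReal.ofReal n / ENNReal.ofReal (t ^ p) := by gcongr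
    _ = ENNReal.ofReal (n / t ^ p) := (ENNReal.ofReal_div_of_pos (pow_pos ht p)).symm

theorem setLIntegral_Ioc_meas_lt_mul_pow_le {p : ℕ} {M : ℝ}
    (hweak : ∀ t : ℝ, 0 < t → μ {x | t < |f x|} ≤ ENNReal.ofReal (M ^ p / t ^ p))
    {A : ℝ} (hA : 0 ≤ A) :
    ∫⁻ t in Ioc 0 A, μ {x | t < |f x|} * ENNReal.ofReal (t ^ p) ≤ ENNReal.ofReal (M ^ p * A) := by
  calc ∫⁻ t in Ioc 0 A, μ {x | t < |f x|} * ENNReal.ofReal (t ^ p)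
      ≤ ∫⁻ _ in Ioc 0 A, ENNReal.ofReal (M ^ p) := by
        refine setLIntegral_mono' measurableSet_Ioc fun t ht => ?_
        calc μ {x | t < |f x|} * ENNReal.ofReal (t ^ p)
            ≤ ENNReal.ofReal (M ^ p / t ^ p) * ENNReal.ofReal (t ^ p) := by
              gcongr; exact hweak t ht.1
          _ ≤ ENNReal.ofReal (M ^ p) := by
              rw [← ENNReal.ofReal_mul' (pow_pos ht.1 p).le, div_mul_cancel₀ _ (pow_pos ht.1 p).ne']
    _ = ENNReal.ofReal (M ^ p * A) := by
        rw [setLIntegral_const, Real.volume_Ioc, sub_zero, ENNReal.ofReal_mul' hA]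

theorem setLIntegral_Ioi_meas_lt_mul_pow_le (hf : AEMeasurable f μ) {p q : ℕ} (hpq : p + 1 < q)
    {n : ℝ} (hn₀ : 0 ≤ n) (hn : ∫⁻ x, ENNReal.ofReal (|f x| ^ q) ∂μ ≤ ENNReal.ofReal n)
    {A : ℝ} (hA : 0 < A) :
    ∫⁻ t in Ioi A, μ {x | t < |f x|} * ENNReal.ofReal (t ^ p) ≤
      ENNReal.ofReal (n * A ^ ((p : ℝ) - q + 1) / (q - p - 1)) := by
  have hs : (p : ℝ) - q < -1 := by
    have : ((p + 1 : ℕ) : ℝ) < q := by exact_mod_cast hpq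
    push_cast at this
    linarith
  calc ∫⁻ t in Ioi A, μ {x | t < |f x|} * ENNReal.ofReal (t ^ p)
      ≤ ∫⁻ t in Ioi A, ENNReal.ofReal n * ENNReal.ofReal (t ^ ((p : ℝ) - q)) := by
        refine setLIntegral_mono' measurableSet_Ioi fun t ht => ?_
        have ht : 0 < t := hA.trans ht
        calc μ {x | t < |f x|} * ENNReal.ofReal (t ^ p)
            ≤ ENNReal.ofReal (n / t ^ q) * ENNReal.ofReal (t ^ p) := by
              gcongr; exact meas_lt_abs_le_of_lintegral_pow_le hf hn ht
          _ = ENNReal.ofReal n * ENNReal.ofReal (t ^ ((p : ℝ) - q)) := by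
              rw [← ENNReal.ofReal_mul hn₀, ← ENNReal.ofReal_mul' (by positivity),
                Real.rpow_sub ht, Real.rpow_natCast, Real.rpow_natCast, mul_div_assoc']
              ring_nf
    _ = ENNReal.ofReal n * ∫⁻ t in Ioi A, ENNReal.ofReal (t ^ ((p : ℝ) - q)) :=
        lintegral_const_mul' _ _ ENNReal.ofReal_ne_top
    _ = ENNReal.ofReal (n * A ^ ((p : ℝ) - q + 1) / (q - p - 1)) := by
        rw [← ofReal_integral_eq_lintegral_ofReal (integrableOn_Ioi_rpow_of_lt hs hA)
            (ae_restrict_of_forall_mem measurableSet_Ioi fun t ht => by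
              have : 0 < t := hA.trans ht; positivity),
          integral_Ioi_rpow_of_lt hs hA, ← ENNReal.ofReal_mul hn₀]
        rw [show (q : ℝ) - p - 1 = -((p : ℝ) - q + 1) by ring, div_neg]
        ring_nf

theorem lintegral_abs_pow_four_le_of_weakL3 (hf : AEMeasurable f μ) {M n : ℝ} (hM : 0 < M)
    (hweak : ∀ t : ℝ, 0 < t → μ {x | t < |f x|} ≤ ENNReal.ofReal (M ^ 3 / t ^ 3))
    (hn : ∫⁻ x, ENNReal.ofReal (|f x| ^ 6) ∂μ ≤ ENNReal.ofReal n) :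
    ∫⁻ x, ENNReal.ofReal (|f x| ^ 4) ∂μ ≤ ENNReal.ofReal (6 * M ^ 2 * n ^ (1 / 3 : ℝ)) := by
  rcases le_or_gt n 0 with hn₀ | hn₀
  · have h6 : ∫⁻ x, ENNReal.ofReal (|f x| ^ 6) ∂μ = 0 :=
      nonpos_iff_eq_zero.1 (hn.trans (ENNReal.ofReal_eq_zero.2 hn₀).le)
    rw [lintegral_eq_zero_iff' (by fun_prop)] at h6
    have h4 : ∫⁻ x, ENNReal.ofReal (|f x| ^ 4) ∂μ = 0 := by
      rw [lintegral_eq_zero_iff' (by fun_prop)]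
      filter_upwards [h6] with x hx
      simp_all
    rw [h4]
    exact zero_le
  set u := n ^ (1 / 3 : ℝ)
  have hu : 0 < u := by positivity
  have hu3 : u ^ 3 = n := by
    rw [← Real.rpow_natCast, ← Real.rpow_mul hn₀.le]
    norm_num
  -- the height balancing the two contributions `M³ A` and `u³ / A²`
  set A := u / M
  have hA : 0 < A := by positivity
  have layer_cake : ∫⁻ x, ENNReal.ofReal (|f x| ^ 4) ∂μ =
      ENNReal.ofReal 4 * ∫⁻ t in Ioi 0, μ {x | t < |f x|} * ENNReal.ofReal (t ^ 3) := by
    have h := lintegral_rpow_eq_lintegral_meas_lt_mul μ (ae_of_all _ fun x => abs_nonneg (f x))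
      hf.abs (by norm_num : (0 : ℝ) < 4)
    simp only [show (4 : ℝ) - 1 = (3 : ℕ) by norm_num, Real.rpow_natCast] at h
    simpa only [show (4 : ℝ) = (4 : ℕ) by norm_num, Real.rpow_natCast] using h
  have tail := setLIntegral_Ioi_meas_lt_mul_pow_le hf (p := 3) (by norm_num) hn₀.le hn hA
  norm_num at tail
  calc ∫⁻ x, ENNReal.ofReal (|f x| ^ 4) ∂μ
      = ENNReal.ofReal 4 * ((∫⁻ t in Ioc 0 A, μ {x | t < |f x|} * ENNReal.ofReal (t ^ 3)) +
          ∫⁻ t in Ioi A, μ {x | t < |f x|} * ENNReal.ofReal (t ^ 3)) := by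
        rw [layer_cake, ← Ioc_union_Ioi_eq_Ioi hA.le,
          lintegral_union measurableSet_Ioi (Ioc_disjoint_Ioi le_rfl)]
    _ ≤ ENNReal.ofReal 4 * (ENNReal.ofReal (M ^ 3 * A) + ENNReal.ofReal (n * (A ^ 2)⁻¹ / 2)) := by
        gcongr ENNReal.ofReal 4 * ?_
        exact add_le_add (setLIntegral_Ioc_meas_lt_mul_pow_le hweak hA.le) tail
    _ = ENNReal.ofReal (6 * M ^ 2 * u) := by
        rw [← ENNReal.ofReal_add (by positivity) (by positivity), ← ENNReal.ofReal_mul (by norm_num)]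
        congr 1
        rw [← hu3, show A = u / M from rfl]
        field_simp
        ring

end LayerCake

theorem integral_abs_pow_six_rpow_third_le {E : Type*} [NormedAddCommGroup E] [NormedSpace ℝ E]
    [MeasurableSpace E] [BorelSpace E] [FiniteDimensional ℝ E] (μ : Measure E)
    [μ.IsAddHaarMeasure] (hE : finrank ℝ E = 3) {f : E → ℝ} (hf : ContDiff ℝ 1 f)
    (hfc : HasCompactSupport f) :
    (∫ x, |f x| ^ 6 ∂μ) ^ (1 / 3 : ℝ) ≤
      (SNormLESNormFDerivOfEqConst ℝ μ 2 : ℝ) ^ 2 * ∫ x, ‖fderiv ℝ f x‖ ^ 2 ∂μ := by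
  set K := SNormLESNormFDerivOfEqConst ℝ μ 2
  have hsob := eLpNorm_le_eLpNorm_fderiv_of_eq μ hf hfc (p := 2) (p' := 6) (by norm_num)
    (by rw [hE]; norm_num) (by rw [hE]; norm_num)
  have hf6 : MemLp f 6 μ := hf.continuous.memLp_of_hasCompactSupport hfc
  have hDf2 : MemLp (fderiv ℝ f) 2 μ :=
    (hf.continuous_fderiv one_ne_zero).memLp_of_hasCompactSupport (hfc.fderiv (𝕜 := ℝ))
  push_cast at hsob
  rw [hf6.eLpNorm_eq_integral_rpow_norm (by norm_num) (by norm_num),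
    hDf2.eLpNorm_eq_integral_rpow_norm (by norm_num) (by norm_num), ← ENNReal.ofReal_coe_nnreal,
    ← ENNReal.ofReal_mul K.coe_nonneg, ENNReal.ofReal_le_ofReal_iff (by positivity)] at hsob
  simp only [ENNReal.toReal_ofNat, Real.norm_eq_abs, Real.rpow_ofNat] at hsob
  calc (∫ x, |f x| ^ 6 ∂μ) ^ (1 / 3 : ℝ) = ((∫ x, |f x| ^ 6 ∂μ) ^ (6⁻¹ : ℝ)) ^ 2 := by
        rw [← Real.rpow_mul_natCast (by positivity)]
        norm_num
    _ ≤ (K * (∫ x, ‖fderiv ℝ f x‖ ^ 2 ∂μ) ^ (2⁻¹ : ℝ)) ^ 2 := by gcongr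
    _ = K ^ 2 * ∫ x, ‖fderiv ℝ f x‖ ^ 2 ∂μ := by
        rw [mul_pow, ← Real.rpow_mul_natCast (by positivity)]
        norm_num

/-- For a C¹ compactly supported weak-L³ function,
`∫ |f|⁴ ≤ C M² ∫ |∇f|²`. -/
theorem stmt_8 :
    ∃ C : ℝ, 0 < C ∧
      ∀ (f : EuclideanSpace ℝ (Fin 3) → ℝ),
      ContDiff ℝ 1 f → HasCompactSupport f →
      ∀ (M : ℝ), 0 < M →
      (∀ h : ℝ, 0 < h →
        volume {x : EuclideanSpace ℝ (Fin 3) | h < |f x|} ≤ ENNReal.ofReal (M ^ 3 / h ^ 3)) →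
      ∫ x, |f x| ^ 4 ≤ C * M ^ 2 * ∫ x, ‖fderiv ℝ f x‖ ^ 2 := by
  set K : ℝ≥0 := SNormLESNormFDerivOfEqConst ℝ (volume : Measure (EuclideanSpace ℝ (Fin 3))) 2
  refine ⟨6 * ((K : ℝ) ^ 2 + 1), by positivity, fun f hf hfc M hM hweak => ?_⟩
  have h6 : Integrable (fun x => |f x| ^ 6) :=
    (hf.continuous.memLp_of_hasCompactSupport (p := 6) hfc).integrable_norm_pow (by norm_num)
      |>.congr (ae_of_all _ fun x => by simp)
  have hD : 0 ≤ ∫ x, ‖fderiv ℝ f x‖ ^ 2 := integral_nonneg fun x => by positivity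
  have hinterp := lintegral_abs_pow_four_le_of_weakL3 hf.continuous.aemeasurable hM hweak
    (ofReal_integral_eq_lintegral_ofReal h6 (ae_of_all _ fun x => by positivity)).ge
  have hsob := integral_abs_pow_six_rpow_third_le volume finrank_euclideanSpace_fin hf hfc
  calc ∫ x, |f x| ^ 4 = (∫⁻ x, ENNReal.ofReal (|f x| ^ 4)).toReal :=
        integral_eq_lintegral_of_nonneg_ae (ae_of_all _ fun x => by positivity)
          (hf.continuous.abs.pow 4).aestronglyMeasurable
    _ ≤ 6 * M ^ 2 * (∫ x, |f x| ^ 6) ^ (1 / 3 : ℝ) :=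
        ENNReal.toReal_le_of_le_ofReal (by positivity) hinterp
    _ ≤ 6 * M ^ 2 * ((K : ℝ) ^ 2 * ∫ x, ‖fderiv ℝ f x‖ ^ 2) := by gcongr
    _ ≤ 6 * ((K : ℝ) ^ 2 + 1) * M ^ 2 * ∫ x, ‖fderiv ℝ f x‖ ^ 2 := by
        nlinarith [mul_nonneg (sq_nonneg M) hD]
end
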